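/- arXiv:1602.05831 — 4 statements merged into one kernel-verified Lean document; each statement's English description precedes it below -/
import Mathlib

section
/- Let A = (A₊, A_ω) be an ω-semigroup and ≡ a two-sorted equivalence relation on A that contains an ω-semigroup congruence of finite index. If ≡ is stable under the operations x ↦ y·x, x ↦ x·y on A₊, x ↦ x·z and x ↦ x^ω from A₊ to A_ω, and z ↦ y·z on A_ω (for all y ∈ A₊ ∪ {1}, z ∈ A_ω), then ≡ is stable under the infinite product: v_i ≡ w_i for all i implies π(v₀, v₁, v₂, ...) ≡ π(w₀, w₁, w₂, ...). -/
/-- The operations of an ω-semigroup: a binary product on the finite sort,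
a mixed product, and an infinite product. -/
structure OmegaSemigroupOps (P O : Type*) where
  mul : P → P → P
  mmul : P → O → O
  pi : (ℕ → P) → O

/-- The finite product `a i * a (i+1) * ... * a (j-1)` (for `i < j`). -/
def OmegaSemigroupOps.prodRange {P O : Type*} (S : OmegaSemigroupOps P O)
    (a : ℕ → P) (i j : ℕ) : P :=
  ((List.range' (i + 1) (j - (i + 1))).map a).foldl S.mul (a i)

/-- The ω-semigroup laws: associativity, mixed associativity, and the two
infinite associativity laws. -/
structure IsOmegaSemigroup {P O : Type*} (S : OmegaSemigroupOps P O) : Prop where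
  mul_assoc : ∀ a b c : P, S.mul (S.mul a b) c = S.mul a (S.mul b c)
  mmul_assoc : ∀ (a b : P) (z : O), S.mmul (S.mul a b) z = S.mmul a (S.mmul b z)
  pi_cons : ∀ a : ℕ → P, S.pi a = S.mmul (a 0) (S.pi fun n => a (n + 1))
  pi_assoc : ∀ (a : ℕ → P) (k : ℕ → ℕ), StrictMono k → 0 < k 0 →
    S.pi a = S.pi fun i => S.prodRange a (if i = 0 then 0 else k (i - 1)) (k i)

/-- One refinement step for the infinite Ramsey theorem for pairs. -/
lemma ramsey_step {κ : Type*} [Finite κ] (c : ℕ → ℕ → κ) (h : ℕ → ℕ) (hm : StrictMono h) :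
    ∃ (γ : κ) (h' : ℕ → ℕ), StrictMono h' ∧ (∀ n, h 0 < h' n) ∧
      (∀ n, c (h 0) (h' n) = γ) ∧ (∀ n, ∃ m, h' n = h m) := by
  obtain ⟨γ, hγ⟩ := Finite.exists_infinite_fiber (fun m => c (h 0) (h (m + 1)))
  have hpinf : (setOf (fun m => c (h 0) (h (m + 1)) = γ)).Infinite :=
    Set.infinite_coe_iff.mp hγ
  set p : ℕ → Prop := fun m => c (h 0) (h (m + 1)) = γ with hp
  refine ⟨γ, fun n => h (Nat.nth p n + 1), ?_, ?_, ?_, ?_⟩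
  · intro i j hij
    exact hm (Nat.succ_lt_succ (Nat.nth_strictMono hpinf hij))
  · intro n
    exact hm (Nat.succ_pos _)
  · intro n
    exact Nat.nth_mem_of_infinite hpinf n
  · intro n
    exact ⟨Nat.nth p n + 1, rfl⟩

/-- Infinite Ramsey theorem for pairs, with a finite set of colours. -/
lemma ramsey_pairs {κ : Type*} [Finite κ] (c : ℕ → ℕ → κ) :
    ∃ (k : ℕ → ℕ) (γ : κ), StrictMono k ∧ 0 < k 0 ∧ ∀ i j, i < j → c (k i) (k j) = γ := by
  classical
  choose Γ H hmono hlt hcol hrange using fun (h : ℕ → ℕ) (hm : StrictMono h) =>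
    ramsey_step c h hm
  let G : ℕ → {h : ℕ → ℕ // StrictMono h} := fun n =>
    Nat.rec ⟨id, strictMono_id⟩ (fun _ q => ⟨H q.1 q.2, hmono q.1 q.2⟩) n
  have hGsucc : ∀ i, (G (i + 1)).1 = H (G i).1 (G i).2 := fun _ => rfl
  set d : ℕ → κ := fun i => Γ (G i).1 (G i).2 with hd
  have nested : ∀ i j, i ≤ j → ∀ n, ∃ m, (G j).1 n = (G i).1 m := by
    intro i j hij
    induction j, hij using Nat.le_induction with
    | base => exact fun n => ⟨n, rfl⟩
    | succ j hij ih =>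
      intro n
      obtain ⟨m₁, hm₁⟩ := hrange (G j).1 (G j).2 n
      obtain ⟨m₂, hm₂⟩ := ih m₁
      exact ⟨m₂, by rw [hGsucc, hm₁, hm₂]⟩
  have heads_mono : StrictMono (fun i => (G i).1 0) := by
    apply strictMono_nat_of_lt_succ
    intro i
    exact hlt (G i).1 (G i).2 0
  have hcolor : ∀ i j, i < j → c ((G i).1 0) ((G j).1 0) = d i := by
    intro i j hij
    obtain ⟨m, hm⟩ := nested (i + 1) j hij 0
    rw [hm, hGsucc]
    exact hcol (G i).1 (G i).2 m
  obtain ⟨γ, hγ⟩ := Finite.exists_infinite_fiber d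
  have hpinf : (setOf (fun i => d i = γ)).Infinite :=
    Set.infinite_coe_iff.mp hγ
  set p : ℕ → Prop := fun i => d i = γ with hp
  have hnth : StrictMono (Nat.nth p) := Nat.nth_strictMono hpinf
  refine ⟨fun i => (G (Nat.nth p (i + 1))).1 0, γ, ?_, ?_, ?_⟩
  · intro i j hij
    exact heads_mono (hnth (Nat.succ_lt_succ hij))
  · have h1 : 0 < Nat.nth p 1 := lt_of_le_of_lt (Nat.zero_le _) (hnth Nat.zero_lt_one)
    calc 0 < Nat.nth p 1 := h1
    _ ≤ (G (Nat.nth p 1)).1 0 := by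
        have := heads_mono.id_le (Nat.nth p 1)
        simpa using this
  · intro i j hij
    have h1 : Nat.nth p (i + 1) < Nat.nth p (j + 1) := hnth (Nat.succ_lt_succ hij)
    rw [hcolor _ _ h1]
    exact Nat.nth_mem_of_infinite hpinf (i + 1)

/-- If a two-sorted equivalence relation on an ω-semigroup contains an
ω-semigroup congruence of finite index and is stable under the unary operations
of the standard unary presentation, then it is stable under infinite products. -/
theorem stmt9 {P O : Type*} (S : OmegaSemigroupOps P O) (hS : IsOmegaSemigroup S)
    (rP : P → P → Prop) (rO : O → O → Prop)
    (hrP : Equivalence rP) (hrO : Equivalence rO)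
    (sP : P → P → Prop) (sO : O → O → Prop)
    (hsP : Equivalence sP) (hsO : Equivalence sO)
    (hs_mul : ∀ a a' b b' : P, sP a a' → sP b b' → sP (S.mul a b) (S.mul a' b'))
    (hs_mmul : ∀ (a a' : P) (z z' : O), sP a a' → sO z z' → sO (S.mmul a z) (S.mmul a' z'))
    (hs_pi : ∀ a b : ℕ → P, (∀ i, sP (a i) (b i)) → sO (S.pi a) (S.pi b))
    (hfinP : Finite (Quot sP)) (hfinO : Finite (Quot sO))
    (hsubP : ∀ a a' : P, sP a a' → rP a a') (hsubO : ∀ z z' : O, sO z z' → rO z z')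
    (hr_left : ∀ x x' y : P, rP x x' → rP (S.mul y x) (S.mul y x'))
    (hr_right : ∀ x x' y : P, rP x x' → rP (S.mul x y) (S.mul x' y))
    (hr_mmul : ∀ (x x' : P) (z : O), rP x x' → rO (S.mmul x z) (S.mmul x' z))
    (hr_omega : ∀ x x' : P, rP x x' → rO (S.pi fun _ => x) (S.pi fun _ => x'))
    (hr_mixl : ∀ (z z' : O) (y : P), rO z z' → rO (S.mmul y z) (S.mmul y z')) :
    ∀ v w : ℕ → P, (∀ i, rP (v i) (w i)) → rO (S.pi v) (S.pi w) := by
  intro v w hvw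
  classical
  haveI := hfinP
  -- sP from equality of Quot classes
  have sP_of_quot : ∀ x y : P, Quot.mk sP x = Quot.mk sP y → sP x y := fun x y h =>
    (hsP.eqvGen_iff).mp (Quot.eq.mp h)
  -- rP is compatible with finite products
  have aux : ∀ (l : List ℕ) (x y : P), rP x y →
      rP ((l.map v).foldl S.mul x) ((l.map w).foldl S.mul y) := by
    intro l
    induction l with
    | nil => intro x y h; exact h
    | cons hd tl ih =>
      intro x y h
      simp only [List.map_cons, List.foldl_cons]
      exact ih _ _ (hrP.trans (hr_right x y (v hd) h) (hr_left (v hd) (w hd) y (hvw hd)))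
  have prodrP : ∀ i j, rP (S.prodRange v i j) (S.prodRange w i j) := fun i j =>
    aux _ _ _ (hvw i)
  -- the two-sorted colouring and Ramsey
  set c : ℕ → ℕ → Quot sP × Quot sP := fun i j =>
    (Quot.mk sP (S.prodRange v i j), Quot.mk sP (S.prodRange w i j)) with hc
  obtain ⟨k, γ, hk, hk0, hmc⟩ := ramsey_pairs c
  set a := S.prodRange v (k 0) (k 1) with ha
  set b := S.prodRange w (k 0) (k 1) with hb
  have hblockv : ∀ n, sP (S.prodRange v (k n) (k (n + 1))) a := by
    intro n
    apply sP_of_quot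
    have h1 := hmc n (n + 1) (lt_add_one n)
    have h2 := hmc 0 1 one_pos
    exact congrArg Prod.fst (h1.trans h2.symm)
  have hblockw : ∀ n, sP (S.prodRange w (k n) (k (n + 1))) b := by
    intro n
    apply sP_of_quot
    have h1 := hmc n (n + 1) (lt_add_one n)
    have h2 := hmc 0 1 one_pos
    exact congrArg Prod.snd (h1.trans h2.symm)
  -- factorizations
  have hfac : ∀ u : ℕ → P, S.pi u =
      S.mmul (S.prodRange u 0 (k 0)) (S.pi fun n => S.prodRange u (k n) (k (n + 1))) := by
    intro u
    rw [hS.pi_assoc u k hk hk0, hS.pi_cons]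
    simp
  have hfv := hfac v
  have hfw := hfac w
  set x := S.prodRange v 0 (k 0) with hx
  set y := S.prodRange w 0 (k 0) with hy
  have hxy : rP x y := prodrP 0 (k 0)
  have hab : rP a b := prodrP (k 0) (k 1)
  have t1 : rO (S.pi v) (S.mmul x (S.pi fun _ => a)) := by
    rw [hfv]
    exact hr_mixl _ _ x (hsubO _ _ (hs_pi _ _ hblockv))
  have t2 : rO (S.mmul x (S.pi fun _ => a)) (S.mmul y (S.pi fun _ => a)) :=
    hr_mmul x y _ hxy
  have t3 : rO (S.mmul y (S.pi fun _ => a)) (S.mmul y (S.pi fun _ => b)) :=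
    hr_mixl _ _ y (hr_omega a b hab)
  have t4 : rO (S.pi w) (S.mmul y (S.pi fun _ => b)) := by
    rw [hfw]
    exact hr_mixl _ _ y (hsubO _ _ (hs_pi _ _ hblockw))
  exact hrO.trans t1 (hrO.trans t2 (hrO.trans t3 (hrO.symm t4)))
end

section
/- A finite ω-semigroup A = (A₊, A_ω) is a quotient of a free ω-semigroup (Σ⁺, Σ^ω) on a finite alphabet Σ (via a surjective ω-semigroup morphism) if and only if A is complete, i.e., every element a ∈ A_ω can be written as a = π(a₀, a₁, a₂, ...) for some sequence (a_i) in A₊. -/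
/-- A morphism of ω-semigroups: preserves the binary, mixed, and infinite products. -/
structure OmegaSemigroupOps.Hom {P O Q R : Type*}
    (S : OmegaSemigroupOps P O) (T : OmegaSemigroupOps Q R) where
  fP : P → Q
  fO : O → R
  map_mul : ∀ a b : P, fP (S.mul a b) = T.mul (fP a) (fP b)
  map_mmul : ∀ (a : P) (z : O), fO (S.mmul a z) = T.mmul (fP a) (fO z)
  map_pi : ∀ a : ℕ → P, fO (S.pi a) = T.pi fun i => fP (a i)

/-- Prefixing an infinite word by a nonempty finite word. -/
def wordAct {α : Type*} (l : {l : List α // l ≠ []}) (s : ℕ → α) : ℕ → α :=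
  fun n => if h : n < l.1.length then l.1.get ⟨n, h⟩ else s (n - l.1.length)

/-- The infinite concatenation of a sequence of nonempty finite words. -/
def flattenSeq {α : Type*} : (ℕ → {l : List α // l ≠ []}) → ℕ → α
  | w, n =>
    if h : n < (w 0).1.length then (w 0).1.get ⟨n, h⟩
    else flattenSeq (fun i => w (i + 1)) (n - (w 0).1.length)
termination_by w n => n
decreasing_by
  have hlen : 0 < (w 0).1.length := List.length_pos_iff.mpr (w 0).2
  omega

/-- The free ω-semigroup `(Σ⁺, Σ^ω)` on an alphabet `Σ = α`: nonempty finite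
words and infinite words, with products given by concatenation. -/
def freeOmegaOps (α : Type*) : OmegaSemigroupOps {l : List α // l ≠ []} (ℕ → α) where
  mul a b := ⟨a.1 ++ b.1, fun hh => a.2 (List.append_eq_nil_iff.mp hh).1⟩
  mmul := wordAct
  pi := flattenSeq

/-- Cumulative offsets. -/
def offs {α : Type*} (w : ℕ → {l : List α // l ≠ []}) : ℕ → ℕ
  | 0 => 0
  | i + 1 => offs w i + (w i).1.length

lemma flattenSeq_shift {α : Type*} (i : ℕ) (w : ℕ → {l : List α // l ≠ []}) (n : ℕ) :
    flattenSeq w (offs w i + n) = flattenSeq (fun j => w (j + i)) n := by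
  induction i generalizing n with
  | zero => simp only [offs, Nat.zero_add]; rfl
  | succ i ih =>
    have h1 : offs w (i + 1) + n = offs w i + ((w i).1.length + n) := by
      simp only [offs]; omega
    rw [h1, ih, flattenSeq]
    have hlen : ¬ ((w i).1.length + n < ((fun j => w (j + i)) 0).1.length) := by
      simp
    rw [dif_neg hlen]
    have h2 : (w i).1.length + n - ((fun j => w (j + i)) 0).1.length = n := by simp
    rw [h2]
    congr 1
    funext j
    congr 1
    omega

lemma flattenSeq_get {α : Type*} (w : ℕ → {l : List α // l ≠ []}) (i m : ℕ)
    (hm : m < (w i).1.length) :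
    flattenSeq w (offs w i + m) = (w i).1.get ⟨m, hm⟩ := by
  rw [flattenSeq_shift]
  rw [flattenSeq]
  have h0 : ((fun j => w (j + i)) 0) = w i := by simp
  rw [dif_pos]
  · simp
  · simpa [h0] using hm

lemma flattenSeq_singleton {α : Type*} : ∀ (n : ℕ) (s : ℕ → α),
    flattenSeq (fun i => (⟨[s i], by simp⟩ : {l : List α // l ≠ []})) n = s n := by
  intro n
  induction n with
  | zero => intro s; rw [flattenSeq]; simp
  | succ n ih =>
    intro s
    rw [flattenSeq]
    simp only [List.length_singleton]
    rw [dif_neg (by omega)]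
    exact ih (fun i => s (i + 1))

section SGAux

variable {P O : Type*} (A : OmegaSemigroupOps P O)

/-- Product of a nonempty list. -/
def listProd (l : {l : List P // l ≠ []}) : P :=
  l.1.tail.foldl A.mul (l.1.head l.2)

lemma listProd_singleton (a : P) : listProd A ⟨[a], by simp⟩ = a := rfl


lemma foldl_mul_assoc (hA : IsOmegaSemigroup A) : ∀ (l : List P) (a b : P),
    l.foldl A.mul (A.mul a b) = A.mul a (l.foldl A.mul b) := by
  intro l
  induction l with
  | nil => intro a b; rfl
  | cons c t ih =>
    intro a b
    simp only [List.foldl_cons]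
    rw [hA.mul_assoc, ih]

lemma listProd_cons (hA : IsOmegaSemigroup A) (a : P) (l : List P) (hl : l ≠ []) :
    listProd A ⟨a :: l, by simp⟩ = A.mul a (listProd A ⟨l, hl⟩) := by
  obtain ⟨b, u, rfl⟩ := List.exists_cons_of_ne_nil hl
  simp only [listProd, List.tail_cons, List.head_cons, List.foldl_cons]
  rw [foldl_mul_assoc A hA]

lemma listProd_append (hA : IsOmegaSemigroup A) (l m : {l : List P // l ≠ []}) :
    listProd A ⟨l.1 ++ m.1, by simp [l.2]⟩ = A.mul (listProd A l) (listProd A m) := by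
  obtain ⟨l, hl⟩ := l
  induction l with
  | nil => exact absurd rfl hl
  | cons a t ih =>
    rcases eq_or_ne t ([] : List P) with rfl | ht
    · simpa [listProd_singleton] using listProd_cons A hA a m.1 m.2
    · have h1 : (a :: t) ++ m.1 = a :: (t ++ m.1) := rfl
      have h2 : t ++ m.1 ≠ [] := by simp [ht]
      calc listProd A ⟨(a :: t) ++ m.1, by simp⟩
          = A.mul a (listProd A ⟨t ++ m.1, h2⟩) := by
            rw [show (⟨(a :: t) ++ m.1, by simp⟩ : {l : List P // l ≠ []})
              = ⟨a :: (t ++ m.1), by simp [ht]⟩ from rfl]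
            exact listProd_cons A hA a (t ++ m.1) h2
        _ = A.mul a (A.mul (listProd A ⟨t, ht⟩) (listProd A m)) := by rw [ih ht]
        _ = A.mul (A.mul a (listProd A ⟨t, ht⟩)) (listProd A m) := (hA.mul_assoc _ _ _).symm
        _ = A.mul (listProd A ⟨a :: t, by simp⟩) (listProd A m) := by
            rw [listProd_cons A hA a t ht]

lemma pi_wordAct (hA : IsOmegaSemigroup A) (l : {l : List P // l ≠ []}) (s : ℕ → P) :
    A.pi (wordAct l s) = A.mmul (listProd A l) (A.pi s) := by
  obtain ⟨l, hl⟩ := l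
  induction l with
  | nil => exact absurd rfl hl
  | cons a t ih =>
    have h0 : wordAct ⟨a :: t, hl⟩ s 0 = a := by simp [wordAct]
    rcases eq_or_ne t ([] : List P) with rfl | ht
    · have hshift : (fun n => wordAct ⟨[a], hl⟩ s (n + 1)) = s := by
        funext n
        simp [wordAct]
      rw [hA.pi_cons, h0, hshift, listProd_singleton]
    · have hshift : (fun n => wordAct ⟨a :: t, hl⟩ s (n + 1)) = wordAct ⟨t, ht⟩ s := by
        funext n
        simp only [wordAct, List.length_cons]
        by_cases h : n < t.length
        · rw [dif_pos (by omega), dif_pos h]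
          rfl
        · rw [dif_neg (by omega), dif_neg h]
          congr 1
          omega
      rw [hA.pi_cons, h0, hshift, ih ht, ← hA.mmul_assoc, listProd_cons A hA a t ht]

lemma prodRange_eq_listProd (a : ℕ → P) (c : ℕ) (l : {l : List P // l ≠ []})
    (h : ∀ m (hm : m < l.1.length), a (c + m) = l.1.get ⟨m, hm⟩) :
    A.prodRange a c (c + l.1.length) = listProd A l := by
  have hlen : 0 < l.1.length := List.length_pos_iff.mpr l.2
  have hhead : a c = l.1.head l.2 := by
    rw [List.head_eq_getElem]
    simpa using h 0 hlen
  have htail : (List.range' (c + 1) (c + l.1.length - (c + 1))).map a = l.1.tail := by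
    apply List.ext_getElem
    · simp; omega
    · intro m h1 h2
      simp only [List.getElem_map, List.getElem_range']
      rw [List.getElem_tail]
      have hm : m + 1 < l.1.length := by
        simp at h2; omega
      rw [show c + 1 + 1 * m = c + (m + 1) by omega]
      simpa using h (m + 1) hm
  rw [OmegaSemigroupOps.prodRange, htail, hhead]
  rfl

end SGAux

lemma pi_flatten {P O : Type*} (A : OmegaSemigroupOps P O) (hA : IsOmegaSemigroup A)
    (w : ℕ → {l : List P // l ≠ []}) :
    A.pi (flattenSeq w) = A.pi (fun i => listProd A (w i)) := by
  have hk : StrictMono (fun i => offs w (i + 1)) := by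
    apply strictMono_nat_of_lt_succ
    intro i
    have : 0 < (w (i + 1)).1.length := List.length_pos_iff.mpr (w (i + 1)).2
    simp only [offs]
    omega
  have hk0 : 0 < offs w 1 := by
    simpa [offs] using List.length_pos_iff.mpr (w 0).2
  rw [hA.pi_assoc (flattenSeq w) (fun i => offs w (i + 1)) hk hk0]
  congr 1
  funext i
  have hoff : (if i = 0 then 0 else offs w (i - 1 + 1)) = offs w i := by
    cases i with
    | zero => simp [offs]
    | succ n => simp
  simp only [hoff]
  have hsplit : offs w (i + 1) = offs w i + (w i).1.length := rfl
  rw [hsplit]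
  exact prodRange_eq_listProd A (flattenSeq w) (offs w i) (w i)
    (fun m hm => flattenSeq_get w i m hm)

/-- A finite ω-semigroup is a quotient of a free ω-semigroup on a finite
alphabet iff it is complete, i.e. every element of the infinite sort is an
infinite product. -/
theorem stmt10 {P O : Type} [Finite P] [Finite O]
    (A : OmegaSemigroupOps P O) (hA : IsOmegaSemigroup A) :
    (∃ (σ : Type) (_ : Finite σ) (f : (freeOmegaOps σ).Hom A),
        Function.Surjective f.fP ∧ Function.Surjective f.fO) ↔
      ∀ a : O, ∃ s : ℕ → P, a = A.pi s := by
  constructor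
  · rintro ⟨σ, _, f, hsP, hsO⟩ a
    obtain ⟨s, hs⟩ := hsO a
    refine ⟨fun i => f.fP ⟨[s i], by simp⟩, ?_⟩
    have hse : s = (freeOmegaOps σ).pi (fun i => (⟨[s i], by simp⟩ : {l : List σ // l ≠ []})) := by
      funext n
      exact (flattenSeq_singleton n s).symm
    calc a = f.fO s := hs.symm
      _ = f.fO ((freeOmegaOps σ).pi (fun i => ⟨[s i], by simp⟩)) := by rw [← hse]
      _ = A.pi (fun i => f.fP ⟨[s i], by simp⟩) := f.map_pi _
  · intro hcomp
    refine ⟨P, ‹Finite P›,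
      ⟨listProd A, A.pi, fun a b => listProd_append A hA a b,
        fun a z => pi_wordAct A hA a z, fun w => pi_flatten A hA w⟩, ?_, ?_⟩
    · intro a
      exact ⟨⟨[a], by simp⟩, rfl⟩
    · intro o
      obtain ⟨s, hs⟩ := hcomp o
      exact ⟨s, hs.symm⟩
end

section
/- Let e : A → B be a surjective morphism of finite weak stabilization algebras where A is a stabilization algebra. Then B is a stabilization algebra; that is, B satisfies the implication x·x = x → x^ω = x. -/
/-- In a finite monoid, every element has an idempotent power. -/
lemma exists_idem_pow' {A : Type*} [Monoid A] [Finite A] (a : A) :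
    ∃ n : ℕ, 1 ≤ n ∧ a ^ n * a ^ n = a ^ n := by
  obtain ⟨i, j, hne, h⟩ := Finite.exists_ne_map_eq_of_infinite (fun n : ℕ => a ^ n)
  wlog hij : i < j generalizing i j
  · exact this j i hne.symm h.symm (by omega)
  set k := j - i with hk
  have hk1 : 1 ≤ k := by omega
  have step : ∀ n, i ≤ n → a ^ (n + k) = a ^ n := by
    intro n hn
    have h1 : n + k = j + (n - i) := by omega
    have h2 : n = i + (n - i) := by omega
    rw [h1, pow_add, ← h, ← pow_add, ← h2]
  have shift : ∀ c n, i ≤ n → a ^ (n + c * k) = a ^ n := by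
    intro c
    induction c with
    | zero => simp
    | succ c ih =>
      intro n hn
      have : n + (c + 1) * k = (n + c * k) + k := by ring
      rw [this, step _ (by omega), ih n hn]
  refine ⟨(i + 1) * k, by nlinarith, ?_⟩
  rw [← pow_add]
  have : (i + 1) * k + (i + 1) * k = (i + 1) * k + (i + 1) * k := rfl
  exact shift (i + 1) ((i + 1) * k) (by nlinarith)

/-- A quotient of a finite stabilization algebra is a stabilization algebra:
if `e : A → B` is a surjective morphism of finite weak stabilization algebras
(monoids with an `ω`-operation satisfying `(sⁿ)^ω = s^ω` for `n ≥ 1`) and `A`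
satisfies `x·x = x → x^ω = x`, then so does `B`. -/
theorem stmt13 {A B : Type*} [Monoid A] [Monoid B] [Finite A] [Finite B]
    (ωA : A → A) (ωB : B → B)
    (hAweak : ∀ (s : A) (n : ℕ), 1 ≤ n → ωA (s ^ n) = ωA s)
    (hBweak : ∀ (t : B) (n : ℕ), 1 ≤ n → ωB (t ^ n) = ωB t)
    (hAstab : ∀ s : A, s * s = s → ωA s = s)
    (e : A →* B) (he : Function.Surjective e) (heω : ∀ a : A, e (ωA a) = ωB (e a)) :
    ∀ t : B, t * t = t → ωB t = t := by
  intro t ht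
  obtain ⟨a, rfl⟩ := he t
  obtain ⟨n, hn1, hidem⟩ := exists_idem_pow' a
  have h1 : ωA a = a ^ n := by
    rw [← hAweak a n hn1]
    exact hAstab _ hidem
  have htpow : ∀ m : ℕ, 1 ≤ m → (e a) ^ m = e a := by
    intro m hm
    induction m with
    | zero => omega
    | succ m ih =>
      rcases Nat.eq_or_lt_of_le hm with h | h
      · simp [← h]
      · rw [pow_succ, ih (by omega), ht]
  rw [← heω, h1, map_pow, htpow n hn1]
end

section
/- Let (p_i : X → X_i)_{i ∈ I} be a limit cone of a codirected diagram of nonempty finite discrete spaces in the category of compact Hausdorff spaces (equivalently, an inverse limit of nonempty finite sets over a codirected poset). Then for each i ∈ I there exists j ≤ i such that the image p_i(X) equals the image g_{ji}(X_j) of the connecting map g_{ji} : X_j → X_i. -/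
open CategoryTheory

/-- In a codirected inverse limit of nonempty finite sets, for each index `i`
there is `j ≤ i` such that the image of the limit projection `p_i` equals the
image of the connecting map `g_{ji} : X_j → X_i`. -/
theorem stmt15 {I : Type*} [PartialOrder I] [Nonempty I]
    (hdir : ∀ i j : I, ∃ k, k ≤ i ∧ k ≤ j)
    (F : I → Type*) [∀ i, Finite (F i)] [∀ i, Nonempty (F i)]
    (g : ∀ {j i : I}, j ≤ i → F j → F i)
    (g_id : ∀ (i : I) (x : F i), g (le_refl i) x = x)
    (g_comp : ∀ {k j i : I} (h1 : k ≤ j) (h2 : j ≤ i) (x : F k),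
      g h2 (g h1 x) = g (h1.trans h2) x) :
    ∀ i : I, ∃ j : I, ∃ h : j ≤ i,
      (Set.range fun x : {x : ∀ i, F i // ∀ (j i : I) (h : j ≤ i), g h (x j) = x i} =>
        x.1 i) = Set.range (g h) := by
  intro i
  classical
  set S : Set ℕ := {n | ∃ j : I, ∃ h : j ≤ i, (Set.range (g h)).ncard = n} with hSdef
  have hS : S.Nonempty := ⟨_, i, le_refl i, rfl⟩
  obtain ⟨j, hj, hcard⟩ := Nat.sInf_mem hS
  refine ⟨j, hj, ?_⟩
  have hmin : ∀ (k : I) (hk : k ≤ i),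
      (Set.range (g hj)).ncard ≤ (Set.range (g hk)).ncard := by
    intro k hk
    rw [hcard]
    exact Nat.sInf_le ⟨k, hk, rfl⟩
  have key : ∀ (k : I) (hk : k ≤ j), Set.range (g (hk.trans hj)) = Set.range (g hj) := by
    intro k hk
    apply Set.eq_of_subset_of_ncard_le
    · rintro _ ⟨z, rfl⟩
      exact ⟨g hk z, g_comp hk hj z⟩
    · exact hmin k (hk.trans hj)
    · exact (Set.range (g hj)).toFinite
  apply Set.Subset.antisymm
  · rintro _ ⟨x, rfl⟩
    exact ⟨x.1 j, x.2 j i hj⟩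
  · rintro _ ⟨z, rfl⟩
    set y := g hj z with hy
    haveI : IsCofilteredOrEmpty I :=
      { cone_objs := fun X Y => (hdir X Y).elim fun k hk =>
          ⟨k, homOfLE hk.1, homOfLE hk.2, trivial⟩
        cone_maps := fun {X Y} f f' => ⟨X, 𝟙 X, Subsingleton.elim _ _⟩ }
    let G : I ⥤ Type _ :=
      { obj := fun k => {w : F k // ∀ hk : k ≤ j, g (hk.trans hj) w = y}
        map := fun {a b} f => TypeCat.ofHom fun w => ⟨g f.le w.1, fun hb => by
          rw [g_comp f.le (hb.trans hj) w.1]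
          exact w.2 (f.le.trans hb)⟩
        map_id := by
          intro a
          ext w
          exact g_id a w.1
        map_comp := by
          intro a b c f f'
          ext w
          exact (g_comp f.le f'.le w.1).symm }
    haveI : ∀ k, Finite (G.obj k) := fun k => Subtype.finite
    haveI : ∀ k, Nonempty (G.obj k) := by
      intro k
      by_cases hk : k ≤ j
      · have hy' : y ∈ Set.range (g (hk.trans hj)) := (key k hk) ▸ ⟨z, rfl⟩
        obtain ⟨w, hw⟩ := hy'
        exact ⟨w, fun hk' => hw⟩
      · exact ⟨Classical.arbitrary (F k), fun hk' => absurd hk' hk⟩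
    obtain ⟨u, hu⟩ := nonempty_sections_of_finite_cofiltered_system G
    refine ⟨⟨fun k => (u k).1, ?_⟩, ?_⟩
    · intro a b h
      exact congrArg Subtype.val (hu (homOfLE h))
    · show (u i).1 = y
      have h1 : g hj (u j).1 = (u i).1 := congrArg Subtype.val (hu (homOfLE hj))
      have h2 : g ((le_refl j).trans hj) (u j).1 = y := (u j).2 (le_refl j)
      rw [← h1]
      exact h2
end
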